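/- Let p ∈ (0,1), and consider a cycle of length k ≥ 4 under the AP design: W_1, …, W_{k−1} follow the path dynamics (P(W_1=1)=p/(1+p), P(W_j=1|W_{j−1}=0)=p, P(W_j=1|W_{j−1}=1)=0), and W_k = 1 if and only if W_1 = 0 and W_{k−1} = 0. Then P(W_k = 1) = (1 − (−p)^{k−1})/(1+p)². -/

import Mathlib

/-!
Let `u j = P(W 1 = 0, W j = 0)`. Conditioning on the full history `W 1, …, W j` gives
`P(W 1 = 0, W (j+1) = 1) = p · u j`, so `u (j+1) = P(W 1 = 0) - p · u j = 1/(1+p) - p · u j`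
with `u 1 = 1/(1+p)`. This linear recursion solves to `u j = (1 - (-p)^j)/(1+p)^2`, and
`P(W k = 1) = u (k-1)`.
-/

open MeasureTheory ProbabilityTheory

section fibers

variable {Ω β : Type*} [MeasurableSpace Ω] (μ : Measure Ω) {f : Ω → β} {s : Finset β}

theorem measure_eq_sum_inter_preimage_singleton (hfs : ∀ ω, f ω ∈ s)
    (hf : ∀ y ∈ s, MeasurableSet (f ⁻¹' {y})) (S : Set Ω) :
    μ S = ∑ y ∈ s, μ (f ⁻¹' {y} ∩ S) := by
  have hcover : f ⁻¹' ↑s = Set.univ := Set.eq_univ_of_forall hfs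
  rw [← Measure.restrict_apply_univ, ← hcover, ← sum_measure_preimage_singleton s hf]
  exact Finset.sum_congr rfl fun y hy => Measure.restrict_apply (hf y hy)

theorem measure_preimage_inter_eq_mul_of_cond [IsFiniteMeasure μ] (hfs : ∀ ω, f ω ∈ s)
    (hf : ∀ y ∈ s, MeasurableSet (f ⁻¹' {y})) {A : Set Ω} {U : Set β} [DecidablePred (· ∈ U)]
    {c : ENNReal}
    (hcond : ∀ y ∈ s, μ (f ⁻¹' {y}) ≠ 0 → μ[A | f ⁻¹' {y}] = if y ∈ U then c else 0)
    (T : Set β) :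
    μ (f ⁻¹' T ∩ A) = c * μ (f ⁻¹' (T ∩ U)) := by
  classical
  have hfiber : ∀ y ∈ s, μ (f ⁻¹' {y} ∩ A) = (if y ∈ U then c else 0) * μ (f ⁻¹' {y}) := by
    intro y hy
    by_cases h0 : μ (f ⁻¹' {y}) = 0
    · rw [h0, mul_zero]
      exact measure_mono_null Set.inter_subset_left h0
    · rw [← hcond y hy h0, cond_mul_eq_inter (hf y hy)]
  rw [measure_eq_sum_inter_preimage_singleton μ hfs hf,
    measure_eq_sum_inter_preimage_singleton μ hfs hf, Finset.mul_sum]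
  refine Finset.sum_congr rfl fun y hy => ?_
  rw [← Set.inter_assoc, ← Set.preimage_inter, ← Set.preimage_inter]
  by_cases hT : y ∈ T <;> by_cases hU : y ∈ U <;>
    simp [hT, hU, Set.singleton_inter_of_mem, hfiber y hy]

end fibers

theorem measureReal_inter_eq_zero_add_inter_eq_one {Ω : Type*} [MeasurableSpace Ω]
    {μ : Measure Ω} [IsFiniteMeasure μ] {X : Ω → ℝ} (hX : Measurable X)
    (h01 : ∀ ω, X ω = 0 ∨ X ω = 1) (S : Set Ω) :
    μ.real (S ∩ {ω | X ω = 0}) + μ.real (S ∩ {ω | X ω = 1}) = μ.real S := by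
  have hdiff : S \ {ω | X ω = 0} = S ∩ {ω | X ω = 1} := by
    ext ω
    rcases h01 ω with h | h <;> simp [h]
  rw [← hdiff]
  exact measureReal_inter_add_sdiff (hX (measurableSet_singleton 0))

theorem eq_closedForm_of_rec {p : ℝ} (hp : 1 + p ≠ 0) {u : ℕ → ℝ} {n : ℕ}
    (h1 : u 1 = 1 / (1 + p))
    (hrec : ∀ j, 1 ≤ j → j + 1 ≤ n → u (j + 1) = 1 / (1 + p) - p * u j) :
    ∀ j, 1 ≤ j → j ≤ n → u j = (1 - (-p) ^ j) / (1 + p) ^ 2 := by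
  intro j hj
  induction j, hj using Nat.le_induction with
  | base =>
    intro _
    rw [h1]
    field_simp
    ring
  | succ j hj ih =>
    intro hjn
    rw [hrec j hj hjn, ih (by omega)]
    field_simp
    ring

namespace APCycle

variable {Ω : Type*} {W : ℕ → Ω → ℝ}

-- A `0/1` history `W 1 ω, …, W j ω` is encoded by the set of indices where it equals `1`.
noncomputable def history (W : ℕ → Ω → ℝ) (j : ℕ) (ω : Ω) : Finset ℕ :=
  (Finset.Icc 1 j).filter fun i => W i ω = 1

theorem history_mem_powerset (j : ℕ) (ω : Ω) : history W j ω ∈ (Finset.Icc 1 j).powerset :=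
  Finset.mem_powerset.2 (Finset.filter_subset _ _)

theorem preimage_history_singleton (h01 : ∀ j ω, W j ω = 0 ∨ W j ω = 1) {j : ℕ}
    {t : Finset ℕ} (ht : t ⊆ Finset.Icc 1 j) :
    history W j ⁻¹' {t} = {ω | ∀ i ∈ Finset.Icc 1 j, W i ω = if i ∈ t then 1 else 0} := by
  ext ω
  have key : ∀ i, (W i ω = 1 ↔ i ∈ t) ↔ W i ω = if i ∈ t then 1 else 0 := fun i => by
    rcases h01 i ω with h | h <;> by_cases hit : i ∈ t <;> simp [h, hit]
  simp only [Set.mem_preimage, Set.mem_singleton_iff, Set.mem_ofPred_eq, history,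
    Finset.ext_iff, Finset.mem_filter]
  constructor
  · intro h i hi
    exact (key i).1 (by simpa [hi] using h i)
  · intro h i
    by_cases hi : i ∈ Finset.Icc 1 j
    · simpa [hi] using (key i).2 (h i hi)
    · simpa [hi] using mt (@ht i) hi

theorem measurableSet_preimage_history [MeasurableSpace Ω] (hW : ∀ j, Measurable (W j))
    (h01 : ∀ j ω, W j ω = 0 ∨ W j ω = 1) (j : ℕ) (t : Finset ℕ)
    (ht : t ∈ (Finset.Icc 1 j).powerset) : MeasurableSet (history W j ⁻¹' {t}) := by
  have : history W j ⁻¹' {t} =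
      ⋂ i ∈ Finset.Icc 1 j, W i ⁻¹' {if i ∈ t then 1 else 0} := by
    rw [preimage_history_singleton h01 (Finset.mem_powerset.1 ht)]
    ext ω
    simp
  rw [this]
  exact Finset.measurableSet_biInter _ fun i _ => hW i (measurableSet_singleton _)

theorem preimage_history_notMem (h01 : ∀ j ω, W j ω = 0 ∨ W j ω = 1) {i j : ℕ}
    (hi : i ∈ Finset.Icc 1 j) : history W j ⁻¹' {t | i ∉ t} = {ω | W i ω = 0} := by
  ext ω
  rcases h01 i ω with h | h <;> simp [history, hi, h]

theorem measureReal_inter_succ_eq_mul [MeasurableSpace Ω] {μ : Measure Ω} [IsFiniteMeasure μ]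
    (hW : ∀ j, Measurable (W j)) (h01 : ∀ j ω, W j ω = 0 ∨ W j ω = 1) {p : ℝ} (hp : 0 ≤ p)
    {j : ℕ} (hj : 1 ≤ j)
    (hmarkov : ∀ b : ℕ → ℝ, μ {ω | ∀ i ∈ Finset.Icc 1 j, W i ω = b i} ≠ 0 →
      μ[{ω | W (j + 1) ω = 1} | {ω | ∀ i ∈ Finset.Icc 1 j, W i ω = b i}]
        = if b j = 0 then ENNReal.ofReal p else 0) :
    μ.real ({ω | W 1 ω = 0} ∩ {ω | W (j + 1) ω = 1})
      = p * μ.real ({ω | W 1 ω = 0} ∩ {ω | W j ω = 0}) := by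
  have h1 : 1 ∈ Finset.Icc 1 j := Finset.mem_Icc.2 ⟨le_rfl, hj⟩
  have hj' : j ∈ Finset.Icc 1 j := Finset.mem_Icc.2 ⟨hj, le_rfl⟩
  have hcond : ∀ t ∈ (Finset.Icc 1 j).powerset, μ (history W j ⁻¹' {t}) ≠ 0 →
      μ[{ω | W (j + 1) ω = 1} | history W j ⁻¹' {t}]
        = if t ∈ {t | j ∉ t} then ENNReal.ofReal p else 0 := by
    intro t ht
    rw [preimage_history_singleton h01 (Finset.mem_powerset.1 ht)]
    intro h0
    rw [hmarkov _ h0]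
    by_cases hjt : j ∈ t <;> simp [hjt]
  have hmul := measure_preimage_inter_eq_mul_of_cond μ (history_mem_powerset j)
    (measurableSet_preimage_history hW h01 j) hcond {t | 1 ∉ t}
  rw [Set.preimage_inter, preimage_history_notMem h01 h1, preimage_history_notMem h01 hj']
    at hmul
  simp only [measureReal_def, hmul, ENNReal.toReal_mul, ENNReal.toReal_ofReal hp]

end APCycle

theorem stmt_13 {Ω : Type*} [MeasureSpace Ω] [IsProbabilityMeasure (ℙ : Measure Ω)]
    (p : ℝ) (hp : p ∈ Set.Ioo (0:ℝ) 1) (k : ℕ) (hk : 4 ≤ k)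
    (W : ℕ → Ω → ℝ) (hW : ∀ j, Measurable (W j))
    (h01 : ∀ j ω, W j ω = 0 ∨ W j ω = 1)
    (h1 : (ℙ : Measure Ω) {ω | W 1 ω = 1} = ENNReal.ofReal (p / (1 + p)))
    -- path dynamics for W_2, …, W_{k-1}: conditional on any history, the next
    -- indicator is 1 with probability p if the previous one is 0, and 0 otherwise
    (hmarkov : ∀ j, 2 ≤ j → j ≤ k - 1 → ∀ b : ℕ → ℝ,
      (ℙ : Measure Ω) {ω | ∀ i ∈ Finset.Icc 1 (j - 1), W i ω = b i} ≠ 0 →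
      ProbabilityTheory.cond ℙ {ω | ∀ i ∈ Finset.Icc 1 (j - 1), W i ω = b i}
          {ω | W j ω = 1}
        = if b (j - 1) = 0 then ENNReal.ofReal p else 0)
    -- the last edge of the cycle is realized iff both its neighbors are not
    (hWk : ∀ ω, W k ω = 1 ↔ (W 1 ω = 0 ∧ W (k - 1) ω = 0)) :
    (ℙ : Measure Ω) {ω | W k ω = 1}
      = ENNReal.ofReal ((1 - (-p) ^ (k - 1)) / (1 + p) ^ 2) := by
  have hp0 : 0 ≤ p := hp.1.le
  have hp1 : 1 + p ≠ 0 := by positivity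
  set W10 : Set Ω := {ω | W 1 ω = 0}
  have hW10 : (ℙ : Measure Ω).real W10 = 1 / (1 + p) := by
    have hsum := measureReal_inter_eq_zero_add_inter_eq_one (μ := ℙ) (hW 1) (h01 1) Set.univ
    rw [Set.univ_inter, Set.univ_inter, measureReal_def _ {ω | W 1 ω = 1}, h1,
      ENNReal.toReal_ofReal (by positivity), probReal_univ] at hsum
    rw [eq_sub_of_add_eq hsum]
    field_simp
    ring
  set u : ℕ → ℝ := fun j => (ℙ : Measure Ω).real (W10 ∩ {ω | W j ω = 0})
  have hu1 : u 1 = 1 / (1 + p) := by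
    change (ℙ : Measure Ω).real (W10 ∩ W10) = _
    rw [Set.inter_self, hW10]
  have hrec : ∀ j, 1 ≤ j → j + 1 ≤ k - 1 → u (j + 1) = 1 / (1 + p) - p * u j := by
    intro j hj hjk
    have hstep := APCycle.measureReal_inter_succ_eq_mul hW h01 hp0 hj
      (by simpa only [Nat.add_sub_cancel] using hmarkov (j + 1) (by omega) hjk)
    rw [← hW10, ← measureReal_inter_eq_zero_add_inter_eq_one (hW (j + 1)) (h01 (j + 1)) W10,
      hstep]
    ring
  have hWk' : {ω | W k ω = 1} = W10 ∩ {ω | W (k - 1) ω = 0} := Set.ext hWk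
  rw [hWk', ← ofReal_measureReal]
  exact congrArg ENNReal.ofReal (eq_closedForm_of_rec hp1 hu1 hrec (k - 1) (by omega) le_rfl)
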